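/- For any integer N ≥ 2 and real λ, the two expressions for the joint density agree: (1/(2√(2π))) e^{-(λ²/2)(1+t/(1+t))} t^{(N−3)/2}/(1+t)^{(N+1)/2} ∑_{k=0}^{N−1} (λ^{2k}/k!)[(N−1−k)+k/(1+t)] = (1/(2√(2π))) e^{λ²/(2(1+t))} (1/(t(1+t))) (t/(1+t))^{(N−1)/2} (1/(N−2)!) [Γ(N, λ²) − λ²·(t/(1+t))·Γ(N−1, λ²)], for all t > 0. -/

import Mathlib

/-! For integer `N` the upper incomplete Gamma function is elementary:
`Γ(m + 1, a) = m! e^{-a} ∑_{k ≤ m} a^k / k!`, since `-m! e^{-u} ∑_{k ≤ m} u^k / k!` is an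
antiderivative of `e^{-u} u^m` vanishing at infinity. Substituting this into the right-hand side,
both sides become `e^{-a}` times a combination of two truncated exponential series in `a = λ²`,
and the identity `∑ k a^k / k! = a ∑ a^k / k!` (over one index fewer) matches the two. -/

open MeasureTheory Real Filter

noncomputable def iGamma (N : ℕ) (a : ℝ) : ℝ := ∫ u in Set.Ioi a, Real.exp (-u) * u ^ (N - 1)

open Topology Finset Nat

noncomputable def truncExp (n : ℕ) (x : ℝ) : ℝ := ∑ k ∈ range n, x ^ k / k !

lemma truncExp_succ (n : ℕ) (x : ℝ) : truncExp (n + 1) x = truncExp n x + x ^ n / n ! :=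
  sum_range_succ _ _

lemma hasDerivAt_truncExp (n : ℕ) (x : ℝ) : HasDerivAt (truncExp (n + 1)) (truncExp n x) x := by
  refine (HasDerivAt.fun_sum (u := range (n + 1))
    fun k _ => (hasDerivAt_pow k x).div_const (k ! : ℝ)).congr_deriv ?_
  rw [sum_range_succ', truncExp]
  simp only [Nat.cast_zero, zero_mul, zero_div, add_zero, Nat.add_sub_cancel]
  refine sum_congr rfl fun k _ => ?_
  rw [Nat.factorial_succ]
  push_cast
  field_simp

lemma sum_range_succ_natCast_mul_pow_div_factorial (n : ℕ) (x : ℝ) :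
    ∑ k ∈ range (n + 1), (k : ℝ) * (x ^ k / k !) = x * truncExp n x := by
  rw [sum_range_succ', truncExp, mul_sum]
  simp only [Nat.cast_zero, zero_mul, add_zero]
  refine sum_congr rfl fun k _ => ?_
  rw [Nat.factorial_succ]
  push_cast
  field_simp
  ring

lemma hasDerivAt_neg_exp_neg_mul_truncExp (m : ℕ) (u : ℝ) :
    HasDerivAt (fun u => -(m ! * (exp (-u) * truncExp (m + 1) u))) (exp (-u) * u ^ m) u := by
  refine ((((hasDerivAt_neg u).exp.mul (hasDerivAt_truncExp m u)).const_mul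
    (m ! : ℝ)).neg).congr_deriv ?_
  rw [truncExp_succ m u]
  field_simp
  ring

lemma integrableOn_exp_neg_mul_pow_Ioi (m : ℕ) {a : ℝ} (ha : 0 ≤ a) :
    IntegrableOn (fun u => exp (-u) * u ^ m) (Set.Ioi a) := by
  have h : IntegrableOn (fun u => exp (-u) * u ^ ((m + 1 : ℝ) - 1)) (Set.Ioi 0) :=
    GammaIntegral_convergent (by positivity)
  refine (h.mono_set (Set.Ioi_subset_Ioi ha)).congr_fun (fun u _ => ?_) measurableSet_Ioi
  simp

lemma tendsto_exp_neg_mul_truncExp_atTop (n : ℕ) :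
    Tendsto (fun u => exp (-u) * truncExp n u) atTop (𝓝 0) := by
  have h := tendsto_finsetSum (range n)
    fun k _ => (tendsto_pow_mul_exp_neg_atTop_nhds_zero k).div_const (k ! : ℝ)
  simp only [zero_div, sum_const_zero] at h
  refine h.congr fun u => ?_
  rw [truncExp, mul_sum]
  exact sum_congr rfl fun k _ => by ring

lemma iGamma_succ_eq (m : ℕ) {a : ℝ} (ha : 0 ≤ a) :
    iGamma (m + 1) a = m ! * exp (-a) * truncExp (m + 1) a := by
  have h := integral_Ioi_of_hasDerivAt_of_tendsto
    (hasDerivAt_neg_exp_neg_mul_truncExp m a).continuousAt.continuousWithinAt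
    (fun u _ => hasDerivAt_neg_exp_neg_mul_truncExp m u) (integrableOn_exp_neg_mul_pow_Ioi m ha)
    (by simpa using ((tendsto_exp_neg_mul_truncExp_atTop (m + 1)).const_mul (m ! : ℝ)).neg)
  rw [iGamma, Nat.add_sub_cancel, h]
  ring

lemma sum_range_succ_pow_div_factorial_mul (n : ℕ) (x c : ℝ) :
    ∑ k ∈ range (n + 1), x ^ k / k ! * ((n - k) + k * c)
      = n * truncExp (n + 1) x - (1 - c) * (x * truncExp n x) := by
  rw [← sum_range_succ_natCast_mul_pow_div_factorial, truncExp, mul_sum, mul_sum,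
    ← sum_sub_distrib]
  exact sum_congr rfl fun k _ => by ring

lemma rpow_sub_one_div_rpow_add_one {x y : ℝ} (hx : 0 < x) (hy : 0 < y) (p : ℝ) :
    x ^ (p - 1) / y ^ (p + 1) = 1 / (x * y) * (x / y) ^ p := by
  rw [div_rpow hx.le hy.le, rpow_sub_one hx.ne', rpow_add_one hy.ne']
  field_simp

theorem stmt6 (N : ℕ) (hN : 2 ≤ N) (l : ℝ) (t : ℝ) (ht : 0 < t) :
    (1 / (2 * Real.sqrt (2 * π))) * Real.exp (-(l ^ 2 / 2) * (1 + t / (1 + t))) *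
        (t ^ (((N : ℝ) - 3) / 2) / (1 + t) ^ (((N : ℝ) + 1) / 2)) *
        ∑ k ∈ Finset.range N,
          l ^ (2 * k) / (Nat.factorial k) * (((N : ℝ) - 1 - k) + (k : ℝ) / (1 + t))
    = (1 / (2 * Real.sqrt (2 * π))) * Real.exp (l ^ 2 / (2 * (1 + t))) *
        (1 / (t * (1 + t))) * (t / (1 + t)) ^ (((N : ℝ) - 1) / 2) *
        (1 / Nat.factorial (N - 2)) *
        (iGamma N (l ^ 2) - l ^ 2 * (t / (1 + t)) * iGamma (N - 1) (l ^ 2)) := by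
  obtain ⟨m, rfl⟩ : ∃ m, N = m + 2 := ⟨N - 2, by omega⟩
  have ht1 : 0 < 1 + t := by linarith
  have hsum : ∑ k ∈ range (m + 2), l ^ (2 * k) / k ! * ((((m + 2 : ℕ) : ℝ) - 1 - k) + k / (1 + t))
      = (m + 1) * truncExp (m + 2) (l ^ 2) - t / (1 + t) * (l ^ 2 * truncExp (m + 1) (l ^ 2)) := by
    have h := sum_range_succ_pow_div_factorial_mul (m + 1) (l ^ 2) (1 / (1 + t))
    rw [show 1 - 1 / (1 + t) = t / (1 + t) by field_simp; ring] at h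
    push_cast at h ⊢
    rw [← h]
    refine sum_congr rfl fun k _ => ?_
    rw [pow_mul]
    ring
  have hexp :
      exp (-(l ^ 2 / 2) * (1 + t / (1 + t))) = exp (l ^ 2 / (2 * (1 + t))) * exp (-l ^ 2) := by
    rw [← exp_add]
    congr 1
    field_simp
    ring
  set p : ℝ := (((m + 2 : ℕ) : ℝ) - 1) / 2
  rw [show (((m + 2 : ℕ) : ℝ) - 3) / 2 = p - 1 by ring,
    show (((m + 2 : ℕ) : ℝ) + 1) / 2 = p + 1 by ring, rpow_sub_one_div_rpow_add_one ht ht1,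
    hsum, hexp, iGamma_succ_eq (m + 1) (sq_nonneg l), show m + 2 - 1 = m + 1 by omega,
    show m + 2 - 2 = m by omega, iGamma_succ_eq m (sq_nonneg l), Nat.factorial_succ]
  push_cast
  field_simp
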